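/- arXiv:2404.05995 — 5 statements merged into one kernel-verified Lean document; each statement's English description precedes it below -/
import Mathlib

section
/- If X and X̃ are symmetric positive definite block matrices X = [[X11, X12],[X12^T, X22]] and X̃ = [[X̃11, X̃12],[X̃12^T, X̃22]] with X̃ ⪰ X (i.e., X̃ - X is positive semidefinite), then their Schur complements satisfy X̃11 - X̃12 X̃22⁻¹ X̃12^T ⪰ X11 - X12 X22⁻¹ X12^T. -/
open Matrix

lemma posDef_of_fromBlocks₂₂ {m n : Type*} [Fintype m] [Fintype n]
    {A : Matrix m m ℝ} {B : Matrix m n ℝ} {C : Matrix n m ℝ} {D : Matrix n n ℝ}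
    (h : (Matrix.fromBlocks A B C D).PosDef) : D.PosDef := by
  refine Matrix.PosDef.of_dotProduct_mulVec_pos ?_ (fun y hy => ?_)
  · have := h.1
    rw [Matrix.isHermitian_fromBlocks_iff] at this
    exact this.2.2.2
  · have := h.dotProduct_mulVec_pos (x := Sum.elim 0 y) (by
      intro hc
      apply hy
      funext i
      exact congrFun hc (Sum.inr i))
    simpa [Matrix.fromBlocks_mulVec, dotProduct] using this

/-- Schur complement monotonicity: if `X̃ ⪰ X` in the Loewner order, with both
symmetric positive definite block matrices, then the Schur complements of the
(2,2) blocks satisfy `X̃11 - X̃12 X̃22⁻¹ X̃12ᵀ ⪰ X11 - X12 X22⁻¹ X12ᵀ`. -/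
theorem schur_complement_monotone
    {n₁ n₂ : ℕ}
    (X11 tX11 : Matrix (Fin n₁) (Fin n₁) ℝ)
    (X12 tX12 : Matrix (Fin n₁) (Fin n₂) ℝ)
    (X22 tX22 : Matrix (Fin n₂) (Fin n₂) ℝ)
    (hX : (Matrix.fromBlocks X11 X12 X12ᵀ X22).PosDef)
    (htX : (Matrix.fromBlocks tX11 tX12 tX12ᵀ tX22).PosDef)
    (hle : (Matrix.fromBlocks tX11 tX12 tX12ᵀ tX22
            - Matrix.fromBlocks X11 X12 X12ᵀ X22).PosSemidef) :
    ((tX11 - tX12 * tX22⁻¹ * tX12ᵀ) - (X11 - X12 * X22⁻¹ * X12ᵀ)).PosSemidef := by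
  have hX22 : X22.PosDef := posDef_of_fromBlocks₂₂ hX
  have htX22 : tX22.PosDef := posDef_of_fromBlocks₂₂ htX
  have iX22 : Invertible X22 := hX22.isUnit.invertible
  have itX22 : Invertible tX22 := htX22.isUnit.invertible
  -- conjTranspose vs transpose over ℝ
  have hT : X12ᴴ = X12ᵀ := rfl
  have htT : tX12ᴴ = tX12ᵀ := rfl
  refine Matrix.PosSemidef.of_dotProduct_mulVec_nonneg ?_ ?_
  · -- Hermitian
    have h1 : (tX11 - tX12 * tX22⁻¹ * tX12ᵀ).IsHermitian :=
      (Matrix.IsHermitian.fromBlocks₂₂ tX11 tX12 htX22.1).mp htX.1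
    have h2 : (X11 - X12 * X22⁻¹ * X12ᵀ).IsHermitian :=
      (Matrix.IsHermitian.fromBlocks₂₂ X11 X12 hX22.1).mp hX.1
    exact h1.sub h2
  · intro x
    set y : Fin n₂ → ℝ := -((tX22⁻¹ * tX12ᵀ) *ᵥ x) with hy
    have key1 := Matrix.schur_complement_eq₂₂ (α := ℝ) tX11 tX12 x y htX22.1
    have key2 := Matrix.schur_complement_eq₂₂ (α := ℝ) X11 X12 x y hX22.1
    rw [htT] at key1
    rw [hT] at key2
    have hzero : (tX22⁻¹ * tX12ᵀ) *ᵥ x + y = 0 := by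
      rw [hy]; simp
    rw [hzero] at key1
    simp only [star_zero, zero_dotProduct, dotProduct_zero,
      Matrix.mulVec_zero, zero_add, Matrix.zero_vecMul] at key1
    -- key1 : quadform X̃ (x⊕y) = x ᵥ* S̃ ⬝ᵥ x
    have hle' := hle.dotProduct_mulVec_nonneg (Sum.elim x y)
    rw [Matrix.sub_mulVec, dotProduct_sub] at hle'
    have hresid : 0 ≤ star ((X22⁻¹ * X12ᵀ) *ᵥ x + y) ᵥ* X22 ⬝ᵥ ((X22⁻¹ * X12ᵀ) *ᵥ x + y) := by
      have := hX22.posSemidef.dotProduct_mulVec_nonneg ((X22⁻¹ * X12ᵀ) *ᵥ x + y)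
      rwa [Matrix.dotProduct_mulVec] at this
    have hSle : star x ᵥ* (X11 - X12 * X22⁻¹ * X12ᵀ) ⬝ᵥ x
        ≤ star (Sum.elim x y) ⬝ᵥ (Matrix.fromBlocks X11 X12 X12ᵀ X22 *ᵥ Sum.elim x y) := by
      rw [Matrix.dotProduct_mulVec, key2]
      exact le_add_of_nonneg_left hresid
    have hStle : star (Sum.elim x y) ⬝ᵥ (Matrix.fromBlocks tX11 tX12 tX12ᵀ tX22 *ᵥ Sum.elim x y)
        = star x ᵥ* (tX11 - tX12 * tX22⁻¹ * tX12ᵀ) ⬝ᵥ x := by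
      rw [Matrix.dotProduct_mulVec, key1]
    rw [Matrix.sub_mulVec, dotProduct_sub, Matrix.dotProduct_mulVec,
      Matrix.dotProduct_mulVec]
    rw [Matrix.dotProduct_mulVec, Matrix.dotProduct_mulVec] at hle'
    rw [Matrix.dotProduct_mulVec] at hSle hStle
    linarith
end

section
/- Let A be a real symmetric positive definite matrix, B a matrix of compatible dimensions, and σ > 0. Then the matrix C - B(A + σ²I)⁻¹B^T is monotone in the pair (C, B, A) in the following sense: if C̃ ⪰ C, Ã ⪰ A (both differences PSD), and the full block matrices [[C̃, B̃],[B̃^T, Ã]] ⪰ [[C, B],[B^T, A]] ⪰ 0, then C̃ - B̃(Ã + σ²I)⁻¹B̃^T ⪰ C - B(A + σ²I)⁻¹B^T. -/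
open Matrix

/-- Regularized Schur-complement monotonicity. If `C̃ ⪰ C`, `Ã ⪰ A`, the block
matrices satisfy `[[C̃,B̃],[B̃ᵀ,Ã]] ⪰ [[C,B],[Bᵀ,A]] ⪰ 0`, `A` is symmetric
positive definite and `σ > 0`, then
`C̃ - B̃(Ã + σ²I)⁻¹B̃ᵀ ⪰ C - B(A + σ²I)⁻¹Bᵀ`. -/
theorem regularized_schur_complement_monotone
    {n₁ n₂ : ℕ}
    (C tC : Matrix (Fin n₁) (Fin n₁) ℝ)
    (B tB : Matrix (Fin n₁) (Fin n₂) ℝ)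
    (A tA : Matrix (Fin n₂) (Fin n₂) ℝ)
    (σ : ℝ) (hσ : 0 < σ)
    (hA : A.PosDef)
    (hC : (tC - C).PosSemidef)
    (hA' : (tA - A).PosSemidef)
    (hblock : (Matrix.fromBlocks C B Bᵀ A).PosSemidef)
    (hblockle : (Matrix.fromBlocks tC tB tBᵀ tA
        - Matrix.fromBlocks C B Bᵀ A).PosSemidef) :
    ((tC - tB * (tA + σ ^ 2 • (1 : Matrix (Fin n₂) (Fin n₂) ℝ))⁻¹ * tBᵀ)
      - (C - B * (A + σ ^ 2 • (1 : Matrix (Fin n₂) (Fin n₂) ℝ))⁻¹ * Bᵀ)).PosSemidef := by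
  have hstar : ∀ {a b : ℕ} (M : Matrix (Fin a) (Fin b) ℝ), Mᴴ = Mᵀ := fun M => by
    ext i j; simp [conjTranspose_apply]
  set s : Matrix (Fin n₂) (Fin n₂) ℝ := σ ^ 2 • (1 : Matrix (Fin n₂) (Fin n₂) ℝ) with hs
  have hsPSD : s.PosSemidef := by
    refine posSemidef_iff_dotProduct_mulVec.mpr ⟨?_, fun x => ?_⟩
    · simp [Matrix.IsHermitian, hs]
    · rw [hs, smul_mulVec, one_mulVec, dotProduct_smul, smul_eq_mul]
      exact mul_nonneg (sq_nonneg σ) (dotProduct_star_self_nonneg x)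
  have hAσ : (A + s).PosDef := hA.add_posSemidef hsPSD
  have htA : tA.PosDef := by
    have := hA.add_posSemidef hA'; rwa [add_sub_cancel] at this
  have htAσ : (tA + s).PosDef := htA.add_posSemidef hsPSD
  haveI := hAσ.isUnit.invertible
  haveI := htAσ.isUnit.invertible
  obtain ⟨hCH, -, -, -⟩ := isHermitian_fromBlocks_iff.mp hblock.isHermitian
  have htCH : tC.IsHermitian := by
    have := hC.isHermitian.add hCH; rwa [sub_add_cancel] at this
  have h1 : (tB * (tA + s)⁻¹ * tBᵀ).IsHermitian := by
    have := isHermitian_mul_mul_conjTranspose tB htAσ.isHermitian.inv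
    rwa [hstar tB] at this
  have h2 : (B * (A + s)⁻¹ * Bᵀ).IsHermitian := by
    have := isHermitian_mul_mul_conjTranspose B hAσ.isHermitian.inv
    rwa [hstar B] at this
  refine posSemidef_iff_dotProduct_mulVec.mpr ⟨(htCH.sub h1).sub (hCH.sub h2), fun x => ?_⟩
  set y : Fin n₂ → ℝ := -(((tA + s)⁻¹ * tBᵀ) *ᵥ x) with hy
  have e1 := Matrix.schur_complement_eq₂₂ tC tB x y htAσ.isHermitian
  have e2 := Matrix.schur_complement_eq₂₂ C B x y hAσ.isHermitian
  rw [hstar tB] at e1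
  rw [hstar B] at e2
  have hy0 : ((tA + s)⁻¹ * tBᵀ) *ᵥ x + y = 0 := by rw [hy]; exact add_neg_cancel _
  rw [hy0] at e1
  simp only [star_zero, Matrix.zero_vecMul, zero_dotProduct, zero_add] at e1
  -- comparison of the two shifted block matrices
  have hM : Matrix.fromBlocks tC tB tBᵀ (tA + s) - Matrix.fromBlocks C B Bᵀ (A + s)
      = Matrix.fromBlocks tC tB tBᵀ tA - Matrix.fromBlocks C B Bᵀ A := by
    ext i j
    cases i <;> cases j <;> simp [Matrix.fromBlocks]
  set z := Sum.elim x y with hz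
  have hdiff : 0 ≤ star z ᵥ* (Matrix.fromBlocks tC tB tBᵀ (tA + s)
      - Matrix.fromBlocks C B Bᵀ (A + s)) ⬝ᵥ z := by
    rw [hM, ← Matrix.dotProduct_mulVec]
    exact hblockle.dotProduct_mulVec_nonneg z
  have hchain : star x ᵥ* (C - B * (A + s)⁻¹ * Bᵀ) ⬝ᵥ x
      ≤ star x ᵥ* (tC - tB * (tA + s)⁻¹ * tBᵀ) ⬝ᵥ x := by
    have hQ : star z ᵥ* Matrix.fromBlocks C B Bᵀ (A + s) ⬝ᵥ z
        ≤ star z ᵥ* Matrix.fromBlocks tC tB tBᵀ (tA + s) ⬝ᵥ z := by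
      have := hdiff
      rwa [Matrix.vecMul_sub, sub_dotProduct, sub_nonneg] at this
    have hfirst : 0 ≤ star (((A + s)⁻¹ * Bᵀ) *ᵥ x + y) ᵥ* (A + s) ⬝ᵥ
        (((A + s)⁻¹ * Bᵀ) *ᵥ x + y) := by
      rw [← Matrix.dotProduct_mulVec]
      exact hAσ.posSemidef.dotProduct_mulVec_nonneg _
    calc star x ᵥ* (C - B * (A + s)⁻¹ * Bᵀ) ⬝ᵥ x
        ≤ star (((A + s)⁻¹ * Bᵀ) *ᵥ x + y) ᵥ* (A + s) ⬝ᵥ (((A + s)⁻¹ * Bᵀ) *ᵥ x + y)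
          + star x ᵥ* (C - B * (A + s)⁻¹ * Bᵀ) ⬝ᵥ x := le_add_of_nonneg_left hfirst
      _ = star z ᵥ* Matrix.fromBlocks C B Bᵀ (A + s) ⬝ᵥ z := e2.symm
      _ ≤ star z ᵥ* Matrix.fromBlocks tC tB tBᵀ (tA + s) ⬝ᵥ z := hQ
      _ = star x ᵥ* (tC - tB * (tA + s)⁻¹ * tBᵀ) ⬝ᵥ x := e1
  rw [Matrix.dotProduct_mulVec, Matrix.vecMul_sub, sub_dotProduct, sub_nonneg]
  exact hchain
end

section
/- Let Λ̃ and Λ be diagonal positive definite matrices of the same size with Λ̃ - Λ positive definite, and let Ỹ, Y be matrices of compatible shape. Then Ỹ Λ̃⁻¹ Ỹ^T - Y Λ⁻¹ Y^T - (Ỹ - Y)(Λ̃ - Λ)⁻¹(Ỹ - Y)^T = -(Ỹ Λ - Y Λ̃) M (Ỹ Λ - Y Λ̃)^T where M = (Λ̃ - Λ)⁻¹ Λ̃⁻¹ Λ⁻¹; in particular this expression is negative semidefinite. -/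
open Matrix

private lemma scalar_id (a b c e L l : ℝ) (hl : 0 < l) (hL : l < L) :
    a * (L⁻¹ * c) - b * (l⁻¹ * e) - (a - b) * ((L - l)⁻¹ * (c - e))
      = -(a * l - b * L) * ((L - l)⁻¹ * L⁻¹ * l⁻¹ * (c * l - e * L)) := by
  have h1 : l ≠ 0 := ne_of_gt hl
  have h2 : L ≠ 0 := ne_of_gt (hl.trans hL)
  have h3 : L - l ≠ 0 := ne_of_gt (sub_pos.mpr hL)
  field_simp
  ring

/-- For diagonal positive definite matrices `Λ̃, Λ` with `Λ̃ - Λ` positive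
definite (entrywise `λ̃ i > λ i > 0`) and matrices `Ỹ, Y`, setting
`M = (Λ̃ - Λ)⁻¹ Λ̃⁻¹ Λ⁻¹`, one has the identity
`Ỹ Λ̃⁻¹ Ỹᵀ - Y Λ⁻¹ Yᵀ - (Ỹ - Y)(Λ̃ - Λ)⁻¹(Ỹ - Y)ᵀ = -(Ỹ Λ - Y Λ̃) M (Ỹ Λ - Y Λ̃)ᵀ`;
in particular this expression is negative semidefinite. -/
theorem diagonal_schur_partA_identity
    {m n : ℕ}
    (lamt lam : Fin n → ℝ)
    (hlam : ∀ i, 0 < lam i) (hlt : ∀ i, lam i < lamt i)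
    (tY Y : Matrix (Fin m) (Fin n) ℝ) :
    (tY * (Matrix.diagonal lamt)⁻¹ * tYᵀ - Y * (Matrix.diagonal lam)⁻¹ * Yᵀ
        - (tY - Y) * (Matrix.diagonal lamt - Matrix.diagonal lam)⁻¹ * (tY - Y)ᵀ
      = -((tY * Matrix.diagonal lam - Y * Matrix.diagonal lamt)
          * ((Matrix.diagonal lamt - Matrix.diagonal lam)⁻¹
              * (Matrix.diagonal lamt)⁻¹ * (Matrix.diagonal lam)⁻¹)
          * (tY * Matrix.diagonal lam - Y * Matrix.diagonal lamt)ᵀ))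
    ∧ (-(tY * (Matrix.diagonal lamt)⁻¹ * tYᵀ - Y * (Matrix.diagonal lam)⁻¹ * Yᵀ
        - (tY - Y) * (Matrix.diagonal lamt - Matrix.diagonal lam)⁻¹
            * (tY - Y)ᵀ)).PosSemidef := by
  have hLt : ∀ i, 0 < lamt i := fun i => (hlam i).trans (hlt i)
  have hsub : ∀ i, 0 < lamt i - lam i := fun i => sub_pos.mpr (hlt i)
  have hinvt : (Matrix.diagonal lamt)⁻¹ = Matrix.diagonal (fun i => (lamt i)⁻¹) := by
    apply Matrix.inv_eq_right_inv
    have h : (fun i => lamt i * (lamt i)⁻¹) = fun _ => (1:ℝ) :=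
      funext fun i => mul_inv_cancel₀ (ne_of_gt (hLt i))
    rw [Matrix.diagonal_mul_diagonal, h, Matrix.diagonal_one]
  have hinv : (Matrix.diagonal lam)⁻¹ = Matrix.diagonal (fun i => (lam i)⁻¹) := by
    apply Matrix.inv_eq_right_inv
    have h : (fun i => lam i * (lam i)⁻¹) = fun _ => (1:ℝ) :=
      funext fun i => mul_inv_cancel₀ (ne_of_gt (hlam i))
    rw [Matrix.diagonal_mul_diagonal, h, Matrix.diagonal_one]
  have hdsub : Matrix.diagonal lamt - Matrix.diagonal lam
      = Matrix.diagonal (fun i => lamt i - lam i) := Matrix.diagonal_sub lamt lam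
  have hinvs : (Matrix.diagonal lamt - Matrix.diagonal lam)⁻¹
      = Matrix.diagonal (fun i => (lamt i - lam i)⁻¹) := by
    rw [hdsub]
    apply Matrix.inv_eq_right_inv
    have h : (fun i => (lamt i - lam i) * (lamt i - lam i)⁻¹) = fun _ => (1:ℝ) :=
      funext fun i => mul_inv_cancel₀ (ne_of_gt (hsub i))
    rw [Matrix.diagonal_mul_diagonal, h, Matrix.diagonal_one]
  have key : (tY * (Matrix.diagonal lamt)⁻¹ * tYᵀ - Y * (Matrix.diagonal lam)⁻¹ * Yᵀ
        - (tY - Y) * (Matrix.diagonal lamt - Matrix.diagonal lam)⁻¹ * (tY - Y)ᵀ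
      = -((tY * Matrix.diagonal lam - Y * Matrix.diagonal lamt)
          * ((Matrix.diagonal lamt - Matrix.diagonal lam)⁻¹
              * (Matrix.diagonal lamt)⁻¹ * (Matrix.diagonal lam)⁻¹)
          * (tY * Matrix.diagonal lam - Y * Matrix.diagonal lamt)ᵀ)) := by
    rw [hinvt, hinv, hinvs]
    ext i j
    simp only [Matrix.sub_apply, Matrix.neg_apply, Matrix.mul_apply, Matrix.transpose_apply,
      Matrix.diagonal_mul_diagonal, Matrix.mul_diagonal, Matrix.diagonal_apply,
      Finset.sum_ite_eq, Finset.sum_ite_eq', Finset.mem_univ, if_true, mul_ite, mul_zero, ite_mul, zero_mul]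
    rw [← Finset.sum_sub_distrib, ← Finset.sum_sub_distrib, ← Finset.sum_neg_distrib]
    refine Finset.sum_congr rfl fun k _ => ?_
    have := scalar_id (tY i k) (Y i k) (tY j k) (Y j k) (lamt k) (lam k) (hlam k) (hlt k)
    calc tY i k * (lamt k)⁻¹ * tY j k - Y i k * (lam k)⁻¹ * Y j k
          - (tY i k - Y i k) * (lamt k - lam k)⁻¹ * (tY j k - Y j k)
        = tY i k * ((lamt k)⁻¹ * tY j k) - Y i k * ((lam k)⁻¹ * Y j k)
          - (tY i k - Y i k) * ((lamt k - lam k)⁻¹ * (tY j k - Y j k)) := by ring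
      _ = -(tY i k * lam k - Y i k * lamt k)
            * ((lamt k - lam k)⁻¹ * (lamt k)⁻¹ * (lam k)⁻¹
              * (tY j k * lam k - Y j k * lamt k)) := this
      _ = -((tY i k * lam k - Y i k * lamt k)
            * ((lamt k - lam k)⁻¹ * (lamt k)⁻¹ * (lam k)⁻¹)
            * (tY j k * lam k - Y j k * lamt k)) := by ring
  refine ⟨key, ?_⟩
  rw [key, neg_neg]
  have hM : Matrix.PosSemidef ((Matrix.diagonal lamt - Matrix.diagonal lam)⁻¹
      * (Matrix.diagonal lamt)⁻¹ * (Matrix.diagonal lam)⁻¹) := by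
    rw [hinvt, hinv, hinvs, Matrix.diagonal_mul_diagonal, Matrix.diagonal_mul_diagonal]
    refine Matrix.posSemidef_diagonal_iff.mpr fun i => ?_
    have h1 := hsub i; have h2 := hLt i; have h3 := hlam i
    positivity
  have := hM.mul_mul_conjTranspose_same (tY * Matrix.diagonal lam - Y * Matrix.diagonal lamt)
  simpa using this
end

section
/- Let w be a positive definite kernel on a finite set V, partitioned as a Gaussian prior. If K̃ ⪰ K in the Loewner order (both symmetric PSD on V, with K̃ - K diagonally dominant with nonnegative diagonal), and the posterior covariances after observing noisy samples at a multiset s are K̃' = K̃_VV - K̃_Vs(K̃_ss + σ²I)⁻¹K̃_sV and K' = K_VV - K_Vs(K_ss + σ²I)⁻¹K_sV, then K' ⪯ K̃'. -/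
open Matrix

open scoped Matrix in
private lemma conjT_toBlocks₂₁ {V S : Type*} [Fintype V] [Fintype S]
    {K : Matrix (V ⊕ S) (V ⊕ S) ℝ} (hK : K.IsHermitian) :
    (K.toBlocks₁₂)ᴴ = K.toBlocks₂₁ := by
  ext i j
  have := congrFun (congrFun hK.eq (Sum.inr i)) (Sum.inl j)
  simpa [conjTranspose_apply, toBlocks₁₂, toBlocks₂₁] using this

/-- Monotonicity of the Gaussian-process posterior covariance in the prior
kernel: if `K̃ ⪰ K` (both PSD kernels on the joint index set `V ⊕ s`), then the
posterior covariances after observing noisy samples at `s`,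
`K' = K_VV - K_Vs (K_ss + σ²I)⁻¹ K_sV` and similarly `K̃'`, satisfy `K' ⪯ K̃'`. -/
theorem posterior_covariance_monotone
    {V S : Type*} [Fintype V] [Fintype S] [DecidableEq V] [DecidableEq S]
    (K tK : Matrix (V ⊕ S) (V ⊕ S) ℝ)
    (hK : K.PosSemidef) (htK : tK.PosSemidef)
    (hle : (tK - K).PosSemidef)
    (σ : ℝ) (hσ : 0 < σ) :
    ((tK.toBlocks₁₁ - tK.toBlocks₁₂
        * (tK.toBlocks₂₂ + σ ^ 2 • (1 : Matrix S S ℝ))⁻¹ * tK.toBlocks₂₁)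
      - (K.toBlocks₁₁ - K.toBlocks₁₂
        * (K.toBlocks₂₂ + σ ^ 2 • (1 : Matrix S S ℝ))⁻¹ * K.toBlocks₂₁)).PosSemidef := by
  classical
  -- notation
  set A := K.toBlocks₁₁ with hAdef
  set B := K.toBlocks₁₂ with hBdef
  set D := K.toBlocks₂₂ + σ ^ 2 • (1 : Matrix S S ℝ) with hDdef
  set tA := tK.toBlocks₁₁ with htAdef
  set tB := tK.toBlocks₁₂ with htBdef
  set tD := tK.toBlocks₂₂ + σ ^ 2 • (1 : Matrix S S ℝ) with htDdef
  have hB21 : Bᴴ = K.toBlocks₂₁ := conjT_toBlocks₂₁ hK.1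
  have htB21 : tBᴴ = tK.toBlocks₂₁ := conjT_toBlocks₂₁ htK.1
  -- positive definiteness of the noisy observation blocks
  have hone : (σ ^ 2 • (1 : Matrix S S ℝ)).PosDef := by
    rw [smul_one_eq_diagonal]
    exact PosDef.diagonal fun _ => by positivity
  have hDpd : D.PosDef := (Matrix.PosDef.posSemidef_add (hK.submatrix Sum.inr) hone)
  have htDpd : tD.PosDef := (Matrix.PosDef.posSemidef_add (htK.submatrix Sum.inr) hone)
  haveI : Invertible D := hDpd.isUnit.invertible
  haveI : Invertible tD := htDpd.isUnit.invertible
  -- the perturbed matrices as block matrices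
  have hMeq : ∀ (M : Matrix (V ⊕ S) (V ⊕ S) ℝ), M.IsHermitian →
      M + fromBlocks 0 0 0 (σ ^ 2 • (1 : Matrix S S ℝ)) =
        fromBlocks M.toBlocks₁₁ M.toBlocks₁₂ (M.toBlocks₁₂)ᴴ
          (M.toBlocks₂₂ + σ ^ 2 • 1) := by
    intro M hM
    rw [conjT_toBlocks₂₁ hM]
    conv_lhs => rw [← fromBlocks_toBlocks M]
    simp [fromBlocks_add]
  have hMK := hMeq K hK.1
  have hMtK := hMeq tK htK.1
  -- hermitian part
  have hherm : ∀ (A' : Matrix V V ℝ) (B' : Matrix V S ℝ) (D' : Matrix S S ℝ),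
      A'.IsHermitian → D'.IsHermitian → (A' - B' * D'⁻¹ * B'ᴴ).IsHermitian := by
    intro A' B' D' hA' hD'
    refine hA'.sub ?_
    have := isHermitian_conjTranspose_mul_mul B'ᴴ hD'.inv
    simpa [Matrix.mul_assoc] using this
  have hAh : A.IsHermitian := hK.1.submatrix Sum.inl
  have htAh : tA.IsHermitian := htK.1.submatrix Sum.inl
  have hDh : D.IsHermitian := hDpd.1
  have htDh : tD.IsHermitian := htDpd.1
  rw [posSemidef_iff_dotProduct_mulVec]
  constructor
  · rw [← hB21, ← htB21]
    exact (hherm tA tB tD htAh htDh).sub (hherm A B D hAh hDh)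
  · intro x
    rw [← hB21, ← htB21]
    -- the minimizing second component for the `tK` problem
    set y : S → ℝ := -((tD⁻¹ * tBᴴ) *ᵥ x) with hy
    set z : (V ⊕ S) → ℝ := Sum.elim x y with hz
    have h1 := schur_complement_eq₂₂ tA tB x y htDh (D := tD)
    have h2 := schur_complement_eq₂₂ A B x y hDh (D := D)
    rw [show (tD⁻¹ * tBᴴ) *ᵥ x + y = 0 by simp [hy]] at h1
    simp only [star_zero, zero_dotProduct, Matrix.zero_vecMul, zero_add] at h1
    -- compare quadratic forms of the two perturbed matrices
    have hcmp : star z ᵥ* (fromBlocks A B Bᴴ D) ⬝ᵥ z ≤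
        star z ᵥ* (fromBlocks tA tB tBᴴ tD) ⬝ᵥ z := by
      rw [← hMK, ← hMtK]
      have h0 := hle.dotProduct_mulVec_nonneg z
      have : star z ⬝ᵥ ((tK + fromBlocks 0 0 0 (σ ^ 2 • 1)) *ᵥ z)
            - star z ⬝ᵥ ((K + fromBlocks 0 0 0 (σ ^ 2 • 1)) *ᵥ z)
          = star z ⬝ᵥ ((tK - K) *ᵥ z) := by
        simp only [add_mulVec, sub_mulVec, dotProduct_add, dotProduct_sub]
        ring
      simp only [dotProduct_mulVec] at this h0 ⊢
      linarith
    -- nonnegativity of the residual term for `K`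
    have hres : 0 ≤ star ((D⁻¹ * Bᴴ) *ᵥ x + y) ᵥ* D ⬝ᵥ ((D⁻¹ * Bᴴ) *ᵥ x + y) := by
      have := hDpd.posSemidef.dotProduct_mulVec_nonneg ((D⁻¹ * Bᴴ) *ᵥ x + y)
      simpa [dotProduct_mulVec] using this
    have key : star x ᵥ* (A - B * D⁻¹ * Bᴴ) ⬝ᵥ x ≤
        star x ᵥ* (tA - tB * tD⁻¹ * tBᴴ) ⬝ᵥ x := by
      rw [← h1]
      calc star x ᵥ* (A - B * D⁻¹ * Bᴴ) ⬝ᵥ x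
          ≤ star (x ⊕ᵥ y) ᵥ* (fromBlocks A B Bᴴ D) ⬝ᵥ (x ⊕ᵥ y) := by
            rw [h2]; linarith
        _ ≤ star (x ⊕ᵥ y) ᵥ* (fromBlocks tA tB tBᴴ tD) ⬝ᵥ (x ⊕ᵥ y) := hcmp
    have : star x ⬝ᵥ (((tA - tB * tD⁻¹ * tBᴴ) - (A - B * D⁻¹ * Bᴴ)) *ᵥ x)
        = star x ᵥ* (tA - tB * tD⁻¹ * tBᴴ) ⬝ᵥ x
          - star x ᵥ* (A - B * D⁻¹ * Bᴴ) ⬝ᵥ x := by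
      simp only [sub_mulVec, dotProduct_sub, dotProduct_mulVec,
        Matrix.vecMul_sub, sub_dotProduct]
    rw [this]
    linarith
end

section
/- Let f: 2^V → ℝ≥0 be a monotone submodular set function with f(∅) = 0 over a finite ground set V, and suppose we select N elements greedily: v_i = argmax_{v ∈ V} f(S_{i-1} ∪ {v}) - f(S_{i-1}), S_i = S_{i-1} ∪ {v_i}. Then f(S_N) ≥ (1 - 1/e) · max_{|S| ≤ N} f(S). -/
open Finset

lemma greedy_telescope
    {V : Type*} [Fintype V] [DecidableEq V]
    (f : Finset V → ℝ)
    (hmono : ∀ A B : Finset V, A ⊆ B → f A ≤ f B)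
    (hsubmod : ∀ (A B : Finset V) (v : V), A ⊆ B → v ∉ B →
      f (insert v B) - f B ≤ f (insert v A) - f A)
    (A : Finset V) :
    ∀ T : Finset V, f (T ∪ A) - f A ≤ ∑ v ∈ T, (f (insert v A) - f A) := by
  intro T
  induction T using Finset.induction_on with
  | empty => simp
  | insert _ _ hvT ih =>
    rename_i v T
    rw [Finset.sum_insert hvT, Finset.insert_union]
    have hterm : (0:ℝ) ≤ f (insert v A) - f A := by
      have := hmono A (insert v A) (Finset.subset_insert _ _)
      linarith
    by_cases hv : v ∈ T ∪ A
    · rw [Finset.insert_eq_self.mpr hv]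
      linarith
    · have := hsubmod A (T ∪ A) v (Finset.subset_union_right) hv
      linarith

/-- Nemhauser–Wolsey–Fisher greedy guarantee: for a monotone submodular set
function `f` with `f(∅) = 0` over a finite ground set, the greedy selection of
`N` elements achieves at least a `(1 - 1/e)` fraction of the optimal value over
all sets of cardinality at most `N`. -/
theorem greedy_submodular_guarantee
    {V : Type*} [Fintype V] [DecidableEq V] [Nonempty V]
    (f : Finset V → ℝ)
    (hmono : ∀ A B : Finset V, A ⊆ B → f A ≤ f B)
    (hsubmod : ∀ (A B : Finset V) (v : V), A ⊆ B → v ∉ B →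
      f (insert v B) - f B ≤ f (insert v A) - f A)
    (hempty : f ∅ = 0)
    (N : ℕ)
    (S : ℕ → Finset V)
    (hS0 : S 0 = ∅)
    (hgreedy : ∀ i, ∃ v : V, S (i + 1) = insert v (S i) ∧
      ∀ u : V, f (insert u (S i)) ≤ f (insert v (S i))) :
    ∀ S' : Finset V, S'.card ≤ N →
      (1 - 1 / Real.exp 1) * f S' ≤ f (S N) := by
  intro S' hcard
  have hfS' : 0 ≤ f S' := by
    have := hmono ∅ S' (Finset.empty_subset _)
    linarith
  rcases Nat.eq_zero_or_pos N with hN0 | hNpos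
  · subst hN0
    have : S' = ∅ := Finset.card_eq_zero.mp (Nat.le_zero.mp hcard)
    subst this
    rw [hS0, hempty]
    simp
  -- main case
  set n : ℝ := (N : ℝ) with hn
  have hn1 : (1:ℝ) ≤ n := by rw [hn]; exact Nat.one_le_cast.mpr hNpos
  have hnpos : (0:ℝ) < n := by linarith
  have hratio : (0:ℝ) ≤ 1 - 1/n := by
    have : 1/n ≤ 1 := by
      rw [div_le_one hnpos]; exact hn1
    linarith
  -- one-step inequality
  have step : ∀ i : ℕ, f S' - f (S (i+1)) ≤ (1 - 1/n) * (f S' - f (S i)) := by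
    intro i
    obtain ⟨v, hv, hmax⟩ := hgreedy i
    have hΔ : 0 ≤ f (S (i+1)) - f (S i) := by
      rw [hv]
      have := hmono (S i) (insert v (S i)) (Finset.subset_insert _ _)
      linarith
    have hsum : ∑ u ∈ S', (f (insert u (S i)) - f (S i))
        ≤ (S'.card : ℝ) * (f (S (i+1)) - f (S i)) := by
      rw [hv]
      calc ∑ u ∈ S', (f (insert u (S i)) - f (S i))
          ≤ ∑ _u ∈ S', (f (insert v (S i)) - f (S i)) := by
            apply Finset.sum_le_sum
            intro u _
            have := hmax u
            linarith
        _ = (S'.card : ℝ) * (f (insert v (S i)) - f (S i)) := by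
            rw [Finset.sum_const, nsmul_eq_mul]
    have hkey : f S' - f (S i) ≤ n * (f (S (i+1)) - f (S i)) := by
      have h1 : f S' ≤ f (S' ∪ S i) := hmono _ _ Finset.subset_union_left
      have h2 := greedy_telescope f hmono hsubmod (S i) S'
      have hcard' : (S'.card : ℝ) ≤ n := by rw [hn]; exact_mod_cast hcard
      have h3 : (S'.card : ℝ) * (f (S (i+1)) - f (S i)) ≤ n * (f (S (i+1)) - f (S i)) :=
        mul_le_mul_of_nonneg_right hcard' hΔ
      linarith
    have hdiv : (f S' - f (S i)) / n ≤ f (S (i+1)) - f (S i) := by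
      rw [div_le_iff₀ hnpos]
      linarith [hkey]
    have : (1 - 1/n) * (f S' - f (S i)) = (f S' - f (S i)) - (f S' - f (S i)) / n := by
      field_simp
    linarith [this, hdiv]
  -- geometric decay
  have decay : ∀ i : ℕ, f S' - f (S i) ≤ (1 - 1/n)^i * f S' := by
    intro i
    induction i with
    | zero => simp [hS0, hempty]
    | succ k ih =>
      calc f S' - f (S (k+1)) ≤ (1 - 1/n) * (f S' - f (S k)) := step k
        _ ≤ (1 - 1/n) * ((1 - 1/n)^k * f S') := by
            exact mul_le_mul_of_nonneg_left ih hratio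
        _ = (1 - 1/n)^(k+1) * f S' := by ring
  have hexp : (1 - 1/n)^N ≤ 1 / Real.exp 1 := by
    have h1 : 1 - 1/n ≤ Real.exp (-(1/n)) := by
      have := Real.add_one_le_exp (-(1/n))
      linarith
    have h2 : (1 - 1/n)^N ≤ (Real.exp (-(1/n)))^N :=
      pow_le_pow_left₀ hratio h1 N
    have h3 : (Real.exp (-(1/n)))^N = Real.exp ((N:ℝ) * (-(1/n))) := by
      rw [← Real.exp_nat_mul]
    have h4 : (N:ℝ) * (-(1/n)) = -1 := by
      rw [hn] at *
      field_simp
    rw [h3, h4] at h2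
    rw [Real.exp_neg] at h2
    rw [inv_eq_one_div] at h2
    exact h2
  have hfinal : f S' - f (S N) ≤ (1/Real.exp 1) * f S' := by
    calc f S' - f (S N) ≤ (1 - 1/n)^N * f S' := decay N
      _ ≤ (1/Real.exp 1) * f S' := mul_le_mul_of_nonneg_right hexp hfS'
  linarith [hfinal]
end
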